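/- For all n ≥ k ≥ 0, u_r(n, n-k) = Σ_{i=0}^{k} Σ_{j=-i}^{i} (-1)^{k+j} · C(n-i, k-i) · s(n, n-i+j) · s(n, n-i-j) · r^{k-i}, where s(n,m) are the (signed) Stirling numbers of the first kind. -/

import Mathlib

/-- `centralu r n k` is the r-central factorial number with even indices of the first kind. -/
def centralu (r : ℕ) : ℕ → ℕ → ℤ
  | 0, 0 => 1
  | 0, _ + 1 => 0
  | n + 1, 0 => (-1) ^ (n + 1) * ∏ i ∈ Finset.range (n + 1), ((i : ℤ) ^ 2 + r)
  | n + 1, k + 1 => centralu r n k - ((n : ℤ) ^ 2 + r) * centralu r n (k + 1)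

/-- Signed Stirling numbers of the first kind:
`∑ m, stirlingFirst n m * x ^ m = x * (x - 1) * ⋯ * (x - n + 1)`. -/
def stirlingFirst : ℕ → ℕ → ℤ
  | 0, 0 => 1
  | 0, _ + 1 => 0
  | _ + 1, 0 => 0
  | n + 1, k + 1 => stirlingFirst n k - (n : ℤ) * stirlingFirst n (k + 1)

/-- Extension of the signed Stirling numbers of the first kind to integer second index,
vanishing for negative indices. -/
def stirlingFirstZ (n : ℕ) (m : ℤ) : ℤ :=
  if 0 ≤ m then stirlingFirst n m.toNat else 0

/-!
The polynomial `∏_{i<n} (x - i² - r)` has coefficients `centralu r n k`, and it is the shift by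
`-r` of `Q(x) = ∏_{i<n} (x - i²)`. Substituting `x²` in `Q` factors it as
`∏ (x - i) · ∏ (x + i)`, the falling and rising factorials, whose `x^m`-coefficients are
`s(n, m)` and `(-1)^(n+m) s(n, m)`. So the coefficients of `Q` are the diagonal convolutions
`∑_j ± s(n, n-i+j) s(n, n-i-j)`, where only `|j| ≤ i` contributes since both factors have
degree `n`. Taylor-expanding `Q` at `-r` contributes the factor `C(n-i, k-i) (-r)^(k-i)`.
-/

open Polynomial Finset

lemma Polynomial.coeff_taylor_eq_sum {R : Type*} [CommSemiring R] (f : R[X]) (c : R) {j d : ℕ}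
    (hf : f.natDegree ≤ j + d) :
    (taylor c f).coeff j =
      ∑ m ∈ range (d + 1), ((m + j).choose j : R) * f.coeff (m + j) * c ^ m := by
  rw [taylor_coeff,
    eval_eq_sum_range' (n := d + 1) ((natDegree_hasseDeriv_le f j).trans_lt (by omega))]
  simp only [hasseDeriv_coeff]

lemma Finset.sum_antidiagonal_eq_sum_Icc {M : Type*} [AddCommMonoid M] (F : ℤ → ℤ → M)
    (d i : ℕ) (hF : ∀ a b, F a b ≠ 0 → 0 ≤ a ∧ 0 ≤ b ∧ a ≤ d + i ∧ b ≤ d + i) :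
    ∑ x ∈ antidiagonal (2 * d), F x.1 x.2 = ∑ j ∈ Icc (-(i : ℤ)) i, F (d + j) (d - j) := by
  refine sum_bij_ne_zero (fun x _ _ => (x.1 : ℤ) - d) ?_ ?_ ?_ ?_
  · rintro ⟨a, b⟩ hab hne
    have := hF _ _ hne
    rw [HasAntidiagonal.mem_antidiagonal] at hab
    rw [mem_Icc]
    omega
  · rintro ⟨a, b⟩ hab - ⟨a', b'⟩ hab' - h
    rw [HasAntidiagonal.mem_antidiagonal] at hab hab'
    simp only [Prod.mk.injEq]
    omega
  · intro j hj hne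
    have := hF _ _ hne
    refine ⟨((d + j).toNat, (d - j).toNat), ?_, ?_, ?_⟩
    · rw [HasAntidiagonal.mem_antidiagonal]; omega
    · rwa [Int.toNat_of_nonneg (by omega), Int.toNat_of_nonneg (by omega)]
    · dsimp only; omega
  · rintro ⟨a, b⟩ hab -
    rw [HasAntidiagonal.mem_antidiagonal] at hab
    congr <;> omega

lemma stirlingFirst_eq_zero_of_lt {n m : ℕ} (h : n < m) : stirlingFirst n m = 0 := by
  induction n generalizing m with
  | zero => obtain ⟨m, rfl⟩ := Nat.exists_eq_add_of_lt h; rfl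
  | succ n ih =>
    obtain ⟨m, rfl⟩ := Nat.exists_eq_add_of_le' (Nat.one_le_of_lt h)
    simp only [stirlingFirst, ih (by omega : n < m), ih (by omega : n < m + 1), mul_zero, sub_zero]

lemma stirlingFirstZ_natCast (n m : ℕ) : stirlingFirstZ n m = stirlingFirst n m := by
  simp [stirlingFirstZ]

lemma stirlingFirstZ_ne_zero {n : ℕ} {m : ℤ} (h : stirlingFirstZ n m ≠ 0) : 0 ≤ m ∧ m ≤ n := by
  unfold stirlingFirstZ at h
  split_ifs at h with hm
  · exact ⟨hm, by_contra fun hn => h (stirlingFirst_eq_zero_of_lt (by omega))⟩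
  · exact absurd rfl h

lemma coeff_descPochhammer (n m : ℕ) : (descPochhammer ℤ n).coeff m = stirlingFirst n m := by
  induction n generalizing m with
  | zero => cases m <;> simp [stirlingFirst, coeff_one]
  | succ n ih =>
    rw [descPochhammer_succ_right, ← C_eq_natCast]
    cases m with
    | zero => cases n <;> simp [mul_coeff_zero, ih, stirlingFirst]
    | succ m => rw [coeff_mul_X_sub_C, ih, ih, stirlingFirst, mul_comm]

lemma coeff_ascPochhammer (n m : ℕ) :
    (ascPochhammer ℤ n).coeff m = (-1) ^ (n + m) * stirlingFirst n m := by
  induction n generalizing m with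
  | zero => cases m <;> simp [stirlingFirst, coeff_one]
  | succ n ih =>
    rw [ascPochhammer_succ_right, ← C_eq_natCast, ← sub_neg_eq_add, ← C_neg]
    cases m with
    | zero => cases n <;> simp [mul_coeff_zero, ih, stirlingFirst]
    | succ m =>
      rw [coeff_mul_X_sub_C, ih, ih, stirlingFirst]
      ring

noncomputable def centralPoly (r n : ℕ) : ℤ[X] := ∏ i ∈ range n, (X - C ((i : ℤ) ^ 2 + r))

lemma centralu_zero_right (r n : ℕ) :
    centralu r n 0 = (-1) ^ n * ∏ i ∈ range n, ((i : ℤ) ^ 2 + r) := by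
  cases n <;> simp [centralu]

lemma coeff_centralPoly (r n k : ℕ) : (centralPoly r n).coeff k = centralu r n k := by
  induction n generalizing k with
  | zero => cases k <;> simp [centralPoly, centralu, coeff_one]
  | succ n ih =>
    rw [centralPoly, prod_range_succ, ← centralPoly]
    cases k with
    | zero =>
      rw [mul_coeff_zero, ih, centralu_zero_right, centralu_zero_right, prod_range_succ,
        coeff_sub, coeff_X_zero, coeff_C_zero]
      ring
    | succ k => rw [coeff_mul_X_sub_C, ih, ih, centralu, mul_comm]

lemma natDegree_centralPoly_le (r n : ℕ) : (centralPoly r n).natDegree ≤ n :=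
  (natDegree_prod_le _ _).trans_eq <| by
    simp only [natDegree_X_sub_C, sum_const, card_range, smul_eq_mul, mul_one]

lemma centralPoly_eq_taylor (r n : ℕ) :
    centralPoly r n = taylor (-(r : ℤ)) (centralPoly 0 n) := by
  rw [centralPoly, centralPoly, ← taylorAlgHom_apply, map_prod]
  refine prod_congr rfl fun i _ => ?_
  rw [map_sub, taylorAlgHom_apply, taylorAlgHom_apply, taylor_X, taylor_C, Nat.cast_zero, add_zero,
    C_neg, C_add]
  ring

lemma expand_centralPoly_zero (n : ℕ) :
    expand ℤ 2 (centralPoly 0 n) = descPochhammer ℤ n * ascPochhammer ℤ n := by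
  induction n with
  | zero => simp [centralPoly]
  | succ n ih =>
    rw [centralPoly, prod_range_succ, ← centralPoly, map_mul, ih, descPochhammer_succ_right,
      ascPochhammer_succ_right]
    rw [map_sub, expand_C, expand_X, Nat.cast_zero, add_zero, C_pow, map_natCast]
    ring

lemma coeff_centralPoly_zero_eq_sum (n i : ℕ) (hi : i ≤ n) :
    (centralPoly 0 n).coeff (n - i) = ∑ j ∈ Icc (-(i : ℤ)) i,
      (-1) ^ ((i : ℤ) + j).toNat * stirlingFirstZ n (n - i + j) * stirlingFirstZ n (n - i - j) := by
  let F : ℤ → ℤ → ℤ := fun a b => (-1) ^ (n + b.toNat) * stirlingFirstZ n a * stirlingFirstZ n b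
  have hF : ∀ a b, F a b ≠ 0 → 0 ≤ a ∧ 0 ≤ b ∧ a ≤ (n - i : ℕ) + i ∧ b ≤ (n - i : ℕ) + i := by
    intro a b h
    have ha := stirlingFirstZ_ne_zero (right_ne_zero_of_mul (left_ne_zero_of_mul h))
    have hb := stirlingFirstZ_ne_zero (right_ne_zero_of_mul h)
    omega
  calc (centralPoly 0 n).coeff (n - i)
      = ∑ x ∈ antidiagonal (2 * (n - i)), F x.1 x.2 := by
        rw [← coeff_expand_mul' two_pos, expand_centralPoly_zero, coeff_mul]
        refine sum_congr rfl fun x _ => ?_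
        simp only [F, coeff_descPochhammer, coeff_ascPochhammer, stirlingFirstZ_natCast,
          Int.toNat_natCast, pow_add]
        ring
    _ = ∑ j ∈ Icc (-(i : ℤ)) i, F (n - i + j) (n - i - j) := by
        rw [sum_antidiagonal_eq_sum_Icc F (n - i) i hF, Nat.cast_sub hi]
    _ = _ := by
        refine sum_congr rfl fun j hj => ?_
        by_cases hb : stirlingFirstZ n (n - i - j) = 0
        · simp [F, hb]
        · have := stirlingFirstZ_ne_zero hb
          rw [mem_Icc] at hj
          have hsign : (-1 : ℤ) ^ (n + (n - i - j : ℤ).toNat) = (-1) ^ ((i : ℤ) + j).toNat :=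
            neg_one_pow_congr (by simp only [Nat.even_iff]; omega)
          simp only [F, hsign]

theorem centralu_eq_stirling_sum (r n k : ℕ) (h : k ≤ n) :
    centralu r n (n - k) =
      ∑ i ∈ Finset.range (k + 1),
        ∑ j ∈ Finset.Icc (-(i : ℤ)) (i : ℤ),
          (-1 : ℤ) ^ ((k : ℤ) + j).toNat * ((n - i).choose (k - i) : ℤ) *
            stirlingFirstZ n ((n : ℤ) - i + j) * stirlingFirstZ n ((n : ℤ) - i - j) *
            (r : ℤ) ^ (k - i) := by
  rw [← coeff_centralPoly, centralPoly_eq_taylor,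
    coeff_taylor_eq_sum (j := n - k) (d := k) _ _
      (by have := natDegree_centralPoly_le 0 n; omega), ← sum_range_reflect]
  refine sum_congr rfl fun i hi => ?_
  rw [mem_range] at hi
  rw [Nat.add_sub_cancel, show k - i + (n - k) = n - i by omega,
    Nat.choose_symm_of_eq_add (show n - i = n - k + (k - i) by omega),
    coeff_centralPoly_zero_eq_sum n i (by omega), mul_sum, sum_mul]
  refine sum_congr rfl fun j hj => ?_
  rw [mem_Icc] at hj
  have hsign : (-1 : ℤ) ^ ((i : ℤ) + j).toNat * (-1) ^ (k - i) = (-1) ^ ((k : ℤ) + j).toNat := by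
    rw [← pow_add]; congr 1; omega
  rw [neg_pow, ← hsign]
  ring
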